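/- arXiv:2009.09264 — 2 statements merged into one kernel-verified Lean document; each statement's English description precedes it below -/
import Mathlib

section
/- Let f ∈ F₁(a,b), let P be a probability measure on a measurable space (Ω,M), and let φ : Ω → ℝ be measurable with E_P[(f*(c₀φ − ν₀))⁺] < ∞ for some ν₀ ∈ ℝ and c₀ > 0. Then for every probability measure Q on (Ω,M) with D_f(Q,P) < ∞, one has E_Q[φ⁺] < ∞. -/
open MeasureTheory Filter Set
open scoped ENNReal NNReal Classical

/-- The positive part of an extended real number, as an element of `ℝ≥0∞`. -/
noncomputable def erealPos (x : EReal) : ℝ≥0∞ := if x = ⊤ then ⊤ else ENNReal.ofReal x.toReal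

/-- Extended expectation of an `EReal`-valued function, with the convention `∞ - ∞ = ∞`. -/
noncomputable def feexp {Ω : Type*} [MeasurableSpace Ω] (P : Measure Ω) (g : Ω → EReal) : EReal :=
  if ∫⁻ x, erealPos (g x) ∂P = ⊤ then ⊤
  else ((∫⁻ x, erealPos (g x) ∂P).toReal : EReal) - ((∫⁻ x, erealPos (-(g x)) ∂P : ℝ≥0∞) : EReal)

/-- The extension of a convex function `f : (a,b) → ℝ` to a convex, lower semicontinuous
function `ℝ → (-∞,∞]`, taking the limiting values at finite endpoints and `∞` outside `[a,b]`. -/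
noncomputable def fExt (a b : EReal) (f : ℝ → ℝ) (x : ℝ) : EReal :=
  if a < (x : EReal) ∧ (x : EReal) < b then (f x : EReal)
  else if (x : EReal) = a then limsup (fun t : ℝ => (f t : EReal)) (nhdsWithin x (Ioi x))
  else if (x : EReal) = b then limsup (fun t : ℝ => (f t : EReal)) (nhdsWithin x (Iio x))
  else ⊤

/-- The `f`-divergence `D_f(Q,P) = E_P[f(dQ/dP)]` for `Q ≪ P`, and `∞` otherwise. -/
noncomputable def fDivg {Ω : Type*} [MeasurableSpace Ω] (a b : EReal) (f : ℝ → ℝ)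
    (Q P : Measure Ω) : EReal :=
  if Q ≪ P then feexp P (fun x => fExt a b f ((Q.rnDeriv P) x).toReal) else ⊤

/-- The Legendre transform `f*(y) = sup_{x ∈ (a,b)} {x y - f x}`. -/
noncomputable def legT (a b : EReal) (f : ℝ → ℝ) (y : ℝ) : EReal :=
  ⨆ x : {t : ℝ // a < (t : EReal) ∧ (t : EReal) < b}, ((x.1 * y - f x.1 : ℝ) : EReal)

/-!
The Fenchel–Young inequality `x y ≤ f(x) + f*(y)` holds for the lower semicontinuous extension
of `f` as well. Applied with `x = dQ/dP` and `y = c₀ φ - ν₀` and integrated against `P`, it gives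
`E_Q[(c₀ φ - ν₀)⁺] ≤ E_P[f(dQ/dP)⁺] + E_P[f*(c₀ φ - ν₀)⁺] < ∞`, and `φ⁺ ≤ c₀⁻¹ ((c₀ φ - ν₀)⁺ + ν₀⁺)`
with `Q` finite.
-/

open scoped Topology

lemma erealPos_coe (r : ℝ) : erealPos (r : EReal) = ENNReal.ofReal r := by
  simp [erealPos]

lemma erealPos_top : erealPos ⊤ = ⊤ := by simp [erealPos]

lemma erealPos_mono : Monotone erealPos := by
  intro u v huv
  by_cases hv : v = ⊤
  · simp [erealPos, hv]
  have hu : u ≠ ⊤ := ne_top_of_le_ne_top hv huv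
  by_cases hu' : u = ⊥
  · simp [erealPos, hu', hv]
  rw [erealPos, if_neg hu, erealPos, if_neg hv]
  exact ENNReal.ofReal_le_ofReal (EReal.toReal_le_toReal huv hu' hv)

lemma erealPos_add_le {u v : EReal} (hu : u ≠ ⊤) (hv : v ≠ ⊤) :
    erealPos (u + v) ≤ erealPos u + erealPos v := by
  by_cases hu' : u = ⊥
  · simp [erealPos, hu']
  by_cases hv' : v = ⊥
  · simp [erealPos, hv']
  lift u to ℝ using ⟨hu, hu'⟩
  lift v to ℝ using ⟨hv, hv'⟩
  rw [← EReal.coe_add, erealPos_coe, erealPos_coe, erealPos_coe]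
  exact ENNReal.ofReal_add_le

lemma measurable_erealPos : Measurable erealPos :=
  Measurable.ite (measurableSet_singleton ⊤) measurable_const
    (ENNReal.measurable_ofReal.comp measurable_ereal_toReal)

section Legendre

variable {a b : EReal} {f : ℝ → ℝ}

lemma measurable_legT (a b : EReal) (f : ℝ → ℝ) : Measurable (legT a b f) :=
  (lowerSemicontinuous_iSup fun _ =>
    (continuous_coe_real_ereal.comp (by fun_prop)).lowerSemicontinuous).measurable

lemma coe_sub_le_legT {t : ℝ} (hat : a < t) (htb : (t : EReal) < b) (y : ℝ) :
    ((t * y - f t : ℝ) : EReal) ≤ legT a b f y :=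
  le_iSup (fun p : {t : ℝ // a < (t : EReal) ∧ (t : EReal) < b} =>
    ((p.1 * y - f p.1 : ℝ) : EReal)) ⟨t, hat, htb⟩

lemma legT_ne_bot (hab : a < b) (y : ℝ) : legT a b f y ≠ ⊥ := by
  obtain ⟨t, hat, htb⟩ := EReal.exists_between_coe_real hab
  exact ne_bot_of_le_ne_bot (EReal.coe_ne_bot _) (coe_sub_le_legT hat htb y)

lemma coe_le_limsup_of_eventually_le {l : Filter ℝ} [l.NeBot] {x : ℝ} (hl : l ≤ 𝓝 x)
    {m : ℝ → ℝ} (hm : ContinuousAt m x) (hmf : ∀ᶠ t in l, m t ≤ f t) :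
    (m x : EReal) ≤ limsup (fun t => (f t : EReal)) l := by
  have hlim : Tendsto (fun t => (m t : EReal)) l (𝓝 (m x)) :=
    continuous_coe_real_ereal.continuousAt.tendsto.comp (hm.tendsto.mono_left hl)
  rw [← hlim.limsup_eq]
  exact limsup_le_limsup (hmf.mono fun _ ht => EReal.coe_le_coe ht)

lemma coe_le_fExt_of_le {m : ℝ → ℝ} (hab : a < b) (hm : Continuous m)
    (hmf : ∀ t : ℝ, a < t → (t : EReal) < b → m t ≤ f t) (x : ℝ) :
    (m x : EReal) ≤ fExt a b f x := by
  rw [fExt]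
  split_ifs with hx hxa hxb
  · exact EReal.coe_le_coe (hmf x hx.1 hx.2)
  · have hxb : ∀ᶠ t : ℝ in 𝓝 x, (t : EReal) < b :=
      continuous_coe_real_ereal.continuousAt.eventually (eventually_lt_nhds (hxa ▸ hab))
    refine coe_le_limsup_of_eventually_le nhdsWithin_le_nhds hm.continuousAt ?_
    filter_upwards [self_mem_nhdsWithin, mem_nhdsWithin_of_mem_nhds hxb] with t hxt htb
    exact hmf t (hxa ▸ EReal.coe_lt_coe hxt) htb
  · have hxa : ∀ᶠ t : ℝ in 𝓝 x, a < (t : EReal) :=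
      continuous_coe_real_ereal.continuousAt.eventually (eventually_gt_nhds (hxb ▸ hab))
    refine coe_le_limsup_of_eventually_le nhdsWithin_le_nhds hm.continuousAt ?_
    filter_upwards [self_mem_nhdsWithin, mem_nhdsWithin_of_mem_nhds hxa] with t htx hat
    exact hmf t hat (hxb ▸ EReal.coe_lt_coe htx)
  · exact le_top

lemma coe_mul_le_fExt_add_legT (hab : a < b) (x : ℝ) {y : ℝ} (hy : legT a b f y ≠ ⊤) :
    ((x * y : ℝ) : EReal) ≤ fExt a b f x + legT a b f y := by
  lift legT a b f y to ℝ using ⟨hy, legT_ne_bot hab y⟩ with c hc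
  have hmf : ∀ t : ℝ, a < t → (t : EReal) < b → t * y - c ≤ f t := fun t hat htb => by
    have := coe_sub_le_legT (f := f) hat htb y
    rw [← hc, EReal.coe_le_coe_iff] at this
    linarith
  calc ((x * y : ℝ) : EReal) = ((x * y - c : ℝ) : EReal) + c := by
        rw [← EReal.coe_add, sub_add_cancel]
    _ ≤ fExt a b f x + c := by
        gcongr
        exact coe_le_fExt_of_le hab (by fun_prop) hmf x

lemma ofReal_mul_le_erealPos_fExt_add_erealPos_legT (hab : a < b) (x y : ℝ) :
    ENNReal.ofReal (x * y) ≤ erealPos (fExt a b f x) + erealPos (legT a b f y) := by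
  by_cases hx : fExt a b f x = ⊤
  · simp [hx, erealPos_top]
  by_cases hy : legT a b f y = ⊤
  · simp [hy, erealPos_top]
  calc ENNReal.ofReal (x * y) = erealPos ((x * y : ℝ) : EReal) := (erealPos_coe _).symm
    _ ≤ erealPos (fExt a b f x + legT a b f y) :=
        erealPos_mono (coe_mul_le_fExt_add_legT hab x hy)
    _ ≤ _ := erealPos_add_le hx hy

end Legendre

section Divergence

variable {Ω : Type*} [MeasurableSpace Ω] {a b : EReal} {f : ℝ → ℝ} {P Q : Measure Ω}

lemma absolutelyContinuous_of_fDivg_ne_top (h : fDivg a b f Q P ≠ ⊤) : Q ≪ P := by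
  by_contra hQP
  exact h (if_neg hQP)

lemma lintegral_erealPos_ne_top_of_feexp_ne_top {g : Ω → EReal} (h : feexp P g ≠ ⊤) :
    ∫⁻ x, erealPos (g x) ∂P ≠ ⊤ := fun htop => h (if_pos htop)

lemma lintegral_erealPos_fExt_rnDeriv_ne_top (h : fDivg a b f Q P ≠ ⊤) :
    ∫⁻ x, erealPos (fExt a b f (Q.rnDeriv P x).toReal) ∂P ≠ ⊤ := by
  rw [fDivg, if_pos (absolutelyContinuous_of_fDivg_ne_top h)] at h
  exact lintegral_erealPos_ne_top_of_feexp_ne_top h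

lemma lintegral_ofReal_le_fExt_rnDeriv_add_legT [SigmaFinite P] [SigmaFinite Q] (hQP : Q ≪ P)
    (hab : a < b) {g : Ω → ℝ} (hg : Measurable g) :
    ∫⁻ x, ENNReal.ofReal (g x) ∂Q ≤ ∫⁻ x, erealPos (fExt a b f (Q.rnDeriv P x).toReal) ∂P
      + ∫⁻ x, erealPos (legT a b f (g x)) ∂P :=
  calc ∫⁻ x, ENNReal.ofReal (g x) ∂Q = ∫⁻ x, Q.rnDeriv P x * ENNReal.ofReal (g x) ∂P :=
        (lintegral_rnDeriv_mul hQP hg.ennreal_ofReal.aemeasurable).symm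
    _ = ∫⁻ x, ENNReal.ofReal ((Q.rnDeriv P x).toReal * g x) ∂P := by
        refine lintegral_congr_ae ?_
        filter_upwards [Q.rnDeriv_lt_top P] with x hx
        rw [ENNReal.ofReal_mul ENNReal.toReal_nonneg, ENNReal.ofReal_toReal hx.ne]
    _ ≤ ∫⁻ x, erealPos (fExt a b f (Q.rnDeriv P x).toReal)
          + erealPos (legT a b f (g x)) ∂P :=
        lintegral_mono fun x => ofReal_mul_le_erealPos_fExt_add_erealPos_legT hab _ _
    _ = _ := lintegral_add_right _ (measurable_erealPos.comp ((measurable_legT a b f).comp hg))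

end Divergence

lemma lintegral_ofReal_lt_top_of_lintegral_ofReal_mul_sub_lt_top {Ω : Type*}
    [MeasurableSpace Ω] {μ : Measure Ω} [IsFiniteMeasure μ] {g : Ω → ℝ} {c : ℝ} (hc : 0 < c)
    (ν : ℝ) (h : ∫⁻ x, ENNReal.ofReal (c * g x - ν) ∂μ < ⊤) :
    ∫⁻ x, ENNReal.ofReal (g x) ∂μ < ⊤ := by
  have hpt : ∀ x, ENNReal.ofReal (g x)
      ≤ ENNReal.ofReal c⁻¹ * (ENNReal.ofReal (c * g x - ν) + ENNReal.ofReal ν) := fun x =>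
    calc ENNReal.ofReal (g x) = ENNReal.ofReal c⁻¹ * ENNReal.ofReal (c * g x - ν + ν) := by
          rw [sub_add_cancel, ← ENNReal.ofReal_mul (by positivity), inv_mul_cancel_left₀ hc.ne']
      _ ≤ _ := by gcongr; exact ENNReal.ofReal_add_le
  calc ∫⁻ x, ENNReal.ofReal (g x) ∂μ
      ≤ ∫⁻ x, ENNReal.ofReal c⁻¹ * (ENNReal.ofReal (c * g x - ν) + ENNReal.ofReal ν) ∂μ :=
        lintegral_mono hpt
    _ = ENNReal.ofReal c⁻¹ * (∫⁻ x, ENNReal.ofReal (c * g x - ν) ∂μ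
          + ENNReal.ofReal ν * μ univ) := by
        rw [lintegral_const_mul' _ _ ENNReal.ofReal_ne_top,
          lintegral_add_right _ measurable_const, lintegral_const]
    _ < ⊤ := ENNReal.mul_lt_top ENNReal.ofReal_lt_top
        (ENNReal.add_lt_top.2 ⟨h, ENNReal.mul_lt_top ENNReal.ofReal_lt_top (measure_lt_top _ _)⟩)

theorem posPart_integrable_of_fDiv_lt_top_general {Ω : Type*} [MeasurableSpace Ω]
    {a b : EReal} (ha1 : a < 1) (hb1 : (1 : EReal) < b)
    {f : ℝ → ℝ}
    (P : Measure Ω) [IsProbabilityMeasure P]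
    {φ : Ω → ℝ} (hφm : Measurable φ)
    {c₀ : ℝ} (hc₀ : 0 < c₀) (ν₀ : ℝ)
    (hint : ∫⁻ x, erealPos (legT a b f (c₀ * φ x - ν₀)) ∂P < ⊤) :
    ∀ Q : Measure Ω, IsProbabilityMeasure Q → fDivg a b f Q P < ⊤ →
      ∫⁻ x, ENNReal.ofReal (φ x) ∂Q < ⊤ := by
  intro Q _ hDiv
  refine lintegral_ofReal_lt_top_of_lintegral_ofReal_mul_sub_lt_top hc₀ ν₀ ?_
  calc ∫⁻ x, ENNReal.ofReal (c₀ * φ x - ν₀) ∂Q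
      ≤ ∫⁻ x, erealPos (fExt a b f (Q.rnDeriv P x).toReal) ∂P
          + ∫⁻ x, erealPos (legT a b f (c₀ * φ x - ν₀)) ∂P :=
        lintegral_ofReal_le_fExt_rnDeriv_add_legT
          (absolutelyContinuous_of_fDivg_ne_top hDiv.ne) (ha1.trans hb1)
          ((hφm.const_mul c₀).sub_const ν₀)
    _ < ⊤ := ENNReal.add_lt_top.2 ⟨(lintegral_erealPos_fExt_rnDeriv_ne_top hDiv.ne).lt_top, hint⟩

/-- **Lemma.** If `f ∈ F₁(a,b)`, `P` is a probability measure, `φ` is measurable and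
`E_P[(f*(c₀ φ - ν₀))⁺] < ∞` for some `ν₀ ∈ ℝ` and `c₀ > 0`, then `E_Q[φ⁺] < ∞` for every
probability measure `Q` with `D_f(Q,P) < ∞`. -/
theorem posPart_integrable_of_fDiv_lt_top {Ω : Type*} [MeasurableSpace Ω]
    {a b : EReal} (ha1 : a < 1) (hb1 : (1 : EReal) < b)
    {f : ℝ → ℝ} (hf : ConvexOn ℝ {t : ℝ | a < (t : EReal) ∧ (t : EReal) < b} f)
    (hf1 : f 1 = 0)
    (P : Measure Ω) [IsProbabilityMeasure P]
    {φ : Ω → ℝ} (hφm : Measurable φ)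
    {c₀ : ℝ} (hc₀ : 0 < c₀) (ν₀ : ℝ)
    (hint : ∫⁻ x, erealPos (legT a b f (c₀ * φ x - ν₀)) ∂P < ⊤) :
    ∀ Q : Measure Ω, IsProbabilityMeasure Q → fDivg a b f Q P < ⊤ →
      ∫⁻ x, ENNReal.ofReal (φ x) ∂Q < ⊤ :=
  posPart_integrable_of_fDiv_lt_top_general ha1 hb1 P hφm hc₀ ν₀ hint
end

section
/- Let f ∈ F₁(a,b) with a ≥ 0, let P be a probability measure on a measurable space (Ω,M), let φ₁,…,φ_k : Ω → ℝ be measurable with φ_i ∈ L¹(P), let ψ : Ω → ℝ be measurable with ψ⁻ ∈ L¹(P), let g : ℝᵏ → ℝ be convex with real-valued Legendre transform g*, and let η > 0. Then the map from (0,∞) × ℝ × ℝᵏ to (−∞,∞] sending (λ, β, ν) to g*(ν) + β + ηλ + λ·E_P[f*((ψ − ν·φ − β)/λ)] is convex. -/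
/-!
Write `w = ψ - ν·φ - β`. The term `g*(ν) + β + ηλ` is convex because `g*` is a supremum of
affine functions. Since `λ > 0`, `λ E_P[f*(w/λ)] = E_P[λ f*(w/λ)]`, and the perspective
`λ f*(y/λ) = sup_s (s y - λ f(s))` is a supremum of linear functions of `(λ, y)`, hence jointly
convex; as `w` is affine in `(β, ν)`, the integrand is pointwise convex in `(λ, β, ν)`.
The extended expectation is monotone, positively homogeneous and subadditive as long as the
negative parts are integrable, and `s = 1` gives `λ f*(w/λ) ≥ w ≥ -ψ⁻ - |ν·φ + β|`, which is
integrable. Measurability comes from `a ≥ 0`, which makes `f*` monotone.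
-/

open MeasureTheory Filter Set
open scoped ENNReal NNReal Classical

namespace EReal

lemma toENNReal_add_add_toENNReal_neg_le (x y : EReal) :
    (x + y).toENNReal + (-x).toENNReal + (-y).toENNReal
      ≤ x.toENNReal + y.toENNReal + (-(x + y)).toENNReal := by
  induction x <;> induction y
  case coe.coe x y =>
    rw [← coe_add, ← coe_neg, ← coe_neg, ← coe_neg]
    simp only [real_coe_toENNReal]
    rw [← ENNReal.toReal_le_toReal (by finiteness) (by finiteness)]
    simp only [ENNReal.toReal_add, ENNReal.ofReal_ne_top, ne_eq, not_false_eq_true,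
      ENNReal.add_ne_top, and_self, ENNReal.toReal_ofReal']
    linarith [max_zero_sub_max_neg_zero_eq_self x, max_zero_sub_max_neg_zero_eq_self y,
      max_zero_sub_max_neg_zero_eq_self (x + y)]
  all_goals simp

lemma coe_add_le_mul_add_mul {r r₁ r₂ c₁ c₂ : ℝ} {X X₁ X₂ : EReal} (hc₁ : 0 ≤ c₁)
    (hc₂ : 0 ≤ c₂) (hr : r ≤ c₁ * r₁ + c₂ * r₂) (hX : X ≤ c₁ * X₁ + c₂ * X₂) :
    (r : EReal) + X ≤ c₁ * (r₁ + X₁) + c₂ * (r₂ + X₂) := by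
  rw [left_distrib_of_nonneg_of_ne_top (EReal.coe_nonneg.2 hc₁) (coe_ne_top _),
    left_distrib_of_nonneg_of_ne_top (EReal.coe_nonneg.2 hc₂) (coe_ne_top _), add_add_add_comm,
    ← coe_mul, ← coe_mul, ← coe_add]
  exact add_le_add (EReal.coe_le_coe_iff.2 hr) hX

lemma coe_mul_iSup {ι : Sort*} {c : ℝ} (hc : 0 < c) (g : ι → EReal) :
    (c : EReal) * ⨆ i, g i = ⨆ i, (c : EReal) * g i := by
  have hc0 : (c : EReal) ≠ 0 := by exact_mod_cast hc.ne'
  exact Monotone.map_iSup_of_continuousAt (f := fun x => (c : EReal) * x)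
    ((continuousAt_mul (.inl hc0) (.inl hc0) (.inl (coe_ne_bot c)) (.inl (coe_ne_top c))).comp
      (Continuous.prodMk_right _).continuousAt)
    (fun _ _ h => mul_le_mul_of_nonneg_left h (EReal.coe_nonneg.2 hc.le)) (coe_mul_bot_of_pos hc)

end EReal

section ExtendedExpectation

/- `erealPos` is definitionally `EReal.toENNReal`; the statements below use the latter to have
its API at hand. -/

variable {Ω : Type*} [MeasurableSpace Ω] {P : Measure Ω} {G H G₁ G₂ : Ω → EReal}

lemma feexp_of_lintegral_eq_top (h : ∫⁻ x, (G x).toENNReal ∂P = ⊤) : feexp P G = ⊤ := if_pos h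

lemma feexp_of_lintegral_ne_top (h : ∫⁻ x, (G x).toENNReal ∂P ≠ ⊤) :
    feexp P G = ((∫⁻ x, (G x).toENNReal ∂P).toReal : EReal) - ∫⁻ x, (-G x).toENNReal ∂P :=
  if_neg h

lemma feexp_eq_coe (h : ∫⁻ x, (G x).toENNReal ∂P ≠ ⊤) (h' : ∫⁻ x, (-G x).toENNReal ∂P ≠ ⊤) :
    feexp P G =
      (((∫⁻ x, (G x).toENNReal ∂P).toReal - (∫⁻ x, (-G x).toENNReal ∂P).toReal : ℝ) : EReal) := by
  rw [feexp_of_lintegral_ne_top h, EReal.coe_sub, EReal.coe_ennreal_toReal h']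

lemma feexp_ne_bot (h : ∫⁻ x, (-G x).toENNReal ∂P ≠ ⊤) : feexp P G ≠ ⊥ := by
  by_cases hG : ∫⁻ x, (G x).toENNReal ∂P = ⊤
  · simp [feexp_of_lintegral_eq_top hG]
  · rw [feexp_eq_coe hG h]
    exact EReal.coe_ne_bot _

lemma feexp_mono (hGH : ∀ x, G x ≤ H x) : feexp P G ≤ feexp P H := by
  by_cases hH : ∫⁻ x, (H x).toENNReal ∂P = ⊤
  · simp [feexp_of_lintegral_eq_top hH]
  have hle : ∫⁻ x, (G x).toENNReal ∂P ≤ ∫⁻ x, (H x).toENNReal ∂P :=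
    lintegral_mono fun x => EReal.toENNReal_le_toENNReal (hGH x)
  rw [feexp_of_lintegral_ne_top hH, feexp_of_lintegral_ne_top (ne_top_of_le_ne_top hH hle)]
  exact EReal.sub_le_sub (EReal.coe_le_coe_iff.2 (ENNReal.toReal_mono hH hle))
    (EReal.coe_ennreal_le_coe_ennreal_iff.2
      (lintegral_mono fun x => EReal.toENNReal_le_toENNReal (EReal.neg_le_neg_iff.2 (hGH x))))

lemma feexp_const_mul {c : ℝ} (hc : 0 ≤ c) :
    feexp P (fun x => (c : EReal) * G x) = c * feexp P G := by
  obtain rfl | hc := hc.eq_or_lt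
  · simp [feexp, erealPos]
  have hcE : (0 : EReal) ≤ c := EReal.coe_nonneg.2 hc.le
  have hpos : ∫⁻ x, ((c : EReal) * G x).toENNReal ∂P
      = ENNReal.ofReal c * ∫⁻ x, (G x).toENNReal ∂P := by
    simp_rw [EReal.toENNReal_mul hcE, EReal.real_coe_toENNReal]
    exact lintegral_const_mul' _ _ ENNReal.ofReal_ne_top
  have hneg : ∫⁻ x, (-((c : EReal) * G x)).toENNReal ∂P
      = ENNReal.ofReal c * ∫⁻ x, (-G x).toENNReal ∂P := by
    simp_rw [← mul_neg, EReal.toENNReal_mul hcE, EReal.real_coe_toENNReal]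
    exact lintegral_const_mul' _ _ ENNReal.ofReal_ne_top
  by_cases hG : ∫⁻ x, (G x).toENNReal ∂P = ⊤
  · rw [feexp_of_lintegral_eq_top hG, EReal.coe_mul_top_of_pos hc, feexp_of_lintegral_eq_top]
    rw [hpos, hG, ENNReal.mul_top (by simpa using hc)]
  rw [feexp_of_lintegral_ne_top hG, feexp_of_lintegral_ne_top (by rw [hpos]; finiteness), hpos,
    hneg, EReal.mul_sub_of_nonneg_of_ne_top hcE (EReal.coe_ne_top c), ENNReal.toReal_mul,
    ENNReal.toReal_ofReal hc.le, EReal.coe_mul, EReal.coe_ennreal_mul, EReal.coe_ennreal_ofReal,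
    max_eq_left hc.le]

lemma feexp_add_le (h₁ : AEMeasurable (fun x => (G₁ x).toENNReal) P)
    (h₂ : AEMeasurable (fun x => (G₂ x).toENNReal) P)
    (h₁' : ∫⁻ x, (-G₁ x).toENNReal ∂P ≠ ⊤) (h₂' : ∫⁻ x, (-G₂ x).toENNReal ∂P ≠ ⊤) :
    feexp P (fun x => G₁ x + G₂ x) ≤ feexp P G₁ + feexp P G₂ := by
  by_cases hA₁ : ∫⁻ x, (G₁ x).toENNReal ∂P = ⊤
  · rw [feexp_of_lintegral_eq_top hA₁, EReal.top_add_of_ne_bot (feexp_ne_bot h₂')]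
    exact le_top
  by_cases hA₂ : ∫⁻ x, (G₂ x).toENNReal ∂P = ⊤
  · rw [feexp_of_lintegral_eq_top hA₂, EReal.add_top_of_ne_bot (feexp_ne_bot h₁')]
    exact le_top
  have hA : ∫⁻ x, (G₁ x + G₂ x).toENNReal ∂P ≠ ⊤ := by
    refine ne_top_of_le_ne_top (b := ∫⁻ x, (G₁ x).toENNReal + (G₂ x).toENNReal ∂P) ?_
      (lintegral_mono fun x => EReal.toENNReal_add_le)
    rw [lintegral_add_left' h₁]
    finiteness
  by_cases hB : ∫⁻ x, (-(G₁ x + G₂ x)).toENNReal ∂P = ⊤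
  · rw [feexp_of_lintegral_ne_top hA, hB]
    simp
  have hint : ∫⁻ x, (G₁ x + G₂ x).toENNReal ∂P + ∫⁻ x, (-G₁ x).toENNReal ∂P
        + ∫⁻ x, (-G₂ x).toENNReal ∂P
      ≤ ∫⁻ x, (G₁ x).toENNReal ∂P + ∫⁻ x, (G₂ x).toENNReal ∂P
        + ∫⁻ x, (-(G₁ x + G₂ x)).toENNReal ∂P :=
    calc _ ≤ ∫⁻ x, (G₁ x + G₂ x).toENNReal + (-G₁ x).toENNReal + (-G₂ x).toENNReal ∂P :=
          (add_le_add_left (le_lintegral_add _ _) _).trans (le_lintegral_add _ _)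
      _ ≤ ∫⁻ x, (G₁ x).toENNReal + (G₂ x).toENNReal + (-(G₁ x + G₂ x)).toENNReal ∂P :=
          lintegral_mono fun x => EReal.toENNReal_add_add_toENNReal_neg_le _ _
      _ = _ := by
          rw [lintegral_add_left' (f := fun x => (G₁ x).toENNReal + (G₂ x).toENNReal)
            (h₁.add h₂), lintegral_add_left' h₁]
  rw [feexp_eq_coe hA hB, feexp_eq_coe hA₁ h₁', feexp_eq_coe hA₂ h₂', ← EReal.coe_add,
    EReal.coe_le_coe_iff]
  have := ENNReal.toReal_mono (by finiteness) hint
  simp only [ENNReal.toReal_add, ne_eq, ENNReal.add_eq_top, hA, hA₁, hA₂, hB, h₁', h₂',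
    or_self, not_false_eq_true] at this
  linarith

lemma feexp_le_mul_add_mul {c₁ c₂ : ℝ} (hc₁ : 0 ≤ c₁) (hc₂ : 0 ≤ c₂)
    (hG : ∀ x, G x ≤ c₁ * G₁ x + c₂ * G₂ x)
    (h₁ : AEMeasurable (fun x => (G₁ x).toENNReal) P)
    (h₂ : AEMeasurable (fun x => (G₂ x).toENNReal) P)
    (h₁' : ∫⁻ x, (-G₁ x).toENNReal ∂P ≠ ⊤) (h₂' : ∫⁻ x, (-G₂ x).toENNReal ∂P ≠ ⊤) :
    feexp P G ≤ c₁ * feexp P G₁ + c₂ * feexp P G₂ := by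
  have hmul {c : ℝ} (hc : 0 ≤ c) (y : EReal) :
      ((c : EReal) * y).toENNReal = ENNReal.ofReal c * y.toENNReal := by
    rw [EReal.toENNReal_mul (EReal.coe_nonneg.2 hc), EReal.real_coe_toENNReal]
  have neg_ne_top {c : ℝ} (hc : 0 ≤ c) {G' : Ω → EReal}
      (h : ∫⁻ x, (-G' x).toENNReal ∂P ≠ ⊤) : ∫⁻ x, (-(c * G' x)).toENNReal ∂P ≠ ⊤ := by
    simp_rw [← mul_neg, hmul hc]
    rw [lintegral_const_mul' _ _ ENNReal.ofReal_ne_top]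
    finiteness
  calc feexp P G ≤ feexp P (fun x => c₁ * G₁ x + c₂ * G₂ x) := feexp_mono hG
    _ ≤ feexp P (fun x => c₁ * G₁ x) + feexp P (fun x => c₂ * G₂ x) := by
      refine feexp_add_le ?_ ?_ (neg_ne_top hc₁ h₁') (neg_ne_top hc₂ h₂')
      · simpa only [hmul hc₁] using h₁.const_mul _
      · simpa only [hmul hc₂] using h₂.const_mul _
    _ = c₁ * feexp P G₁ + c₂ * feexp P G₂ := by rw [feexp_const_mul hc₁, feexp_const_mul hc₂]

end ExtendedExpectation

lemma sum_smul_add_smul_mul {ι : Type*} [Fintype ι] (c₁ c₂ : ℝ) (ν₁ ν₂ z : ι → ℝ) :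
    ∑ i, (c₁ • ν₁ + c₂ • ν₂) i * z i = c₁ * ∑ i, ν₁ i * z i + c₂ * ∑ i, ν₂ i * z i := by
  simp only [Pi.add_apply, Pi.smul_apply, smul_eq_mul, add_mul, Finset.sum_add_distrib,
    Finset.mul_sum, mul_assoc]

lemma convexOn_of_isLUB_legendre {ι : Type*} [Fintype ι] {g gs : (ι → ℝ) → ℝ}
    (hgs : ∀ ν, IsLUB (range fun z => (∑ i, ν i * z i) - g z) (gs ν)) :
    ConvexOn ℝ univ gs := by
  refine ⟨convex_univ, fun ν₁ _ ν₂ _ c₁ c₂ hc₁ hc₂ hc => (hgs _).2 ?_⟩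
  rintro _ ⟨z, rfl⟩
  have h₁ := (hgs ν₁).1 ⟨z, rfl⟩
  have h₂ := (hgs ν₂).1 ⟨z, rfl⟩
  calc (∑ i, (c₁ • ν₁ + c₂ • ν₂) i * z i) - g z
      = c₁ * ((∑ i, ν₁ i * z i) - g z) + c₂ * ((∑ i, ν₂ i * z i) - g z) := by
        rw [sum_smul_add_smul_mul]
        linear_combination (g z) * hc
    _ ≤ c₁ • gs ν₁ + c₂ • gs ν₂ := by
        simp only [smul_eq_mul]
        gcongr

section LegendreTransform

variable {a b : EReal} {f : ℝ → ℝ}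

lemma le_legT (ha1 : a < 1) (hb1 : 1 < b) (hf1 : f 1 = 0) (y : ℝ) :
    (y : EReal) ≤ legT a b f y :=
  le_iSup_of_le (⟨1, by simpa using ha1, by simpa using hb1⟩ : {t : ℝ // a < t ∧ t < b})
    (by simp [hf1])

lemma legT_mono (ha : 0 ≤ a) : Monotone (legT a b f) := fun _ _ h =>
  iSup_mono fun s => EReal.coe_le_coe_iff.2 <| sub_le_sub_right
    (mul_le_mul_of_nonneg_left h (EReal.coe_nonneg.1 (ha.trans s.2.1.le))) _

variable {l : ℝ}

lemma coe_mul_legT_div (hl : 0 < l) (y : ℝ) :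
    (l : EReal) * legT a b f (y / l)
      = ⨆ s : {t : ℝ // a < t ∧ t < b}, ((s.1 * y - l * f s.1 : ℝ) : EReal) := by
  rw [legT, EReal.coe_mul_iSup hl]
  congr with s
  rw [← EReal.coe_mul]
  congr 1
  field_simp

lemma coe_mul_legT_div_mono (ha : 0 ≤ a) (hl : 0 < l) :
    Monotone fun y => (l : EReal) * legT a b f (y / l) := fun _ _ h =>
  mul_le_mul_of_nonneg_left (legT_mono ha (div_le_div_of_nonneg_right h hl.le))
    (EReal.coe_nonneg.2 hl.le)

lemma le_coe_mul_legT_div (ha1 : a < 1) (hb1 : 1 < b) (hf1 : f 1 = 0) (hl : 0 < l) (y : ℝ) :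
    (y : EReal) ≤ l * legT a b f (y / l) :=
  calc (y : EReal) = l * ((y / l : ℝ) : EReal) := by
        rw [← EReal.coe_mul, mul_div_cancel₀ _ hl.ne']
    _ ≤ l * legT a b f (y / l) :=
        mul_le_mul_of_nonneg_left (le_legT ha1 hb1 hf1 _) (EReal.coe_nonneg.2 hl.le)

lemma coe_mul_legT_div_convex_comb {l₁ l₂ t : ℝ} (hl₁ : 0 < l₁) (hl₂ : 0 < l₂) (ht₀ : 0 ≤ t)
    (ht₁ : t ≤ 1) (y₁ y₂ : ℝ) :
    ((t * l₁ + (1 - t) * l₂ : ℝ) : EReal)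
        * legT a b f ((t * y₁ + (1 - t) * y₂) / (t * l₁ + (1 - t) * l₂))
      ≤ t * ((l₁ : EReal) * legT a b f (y₁ / l₁))
        + ((1 - t : ℝ) : EReal) * ((l₂ : EReal) * legT a b f (y₂ / l₂)) := by
  have hl : 0 < t * l₁ + (1 - t) * l₂ :=
    convex_Ioi (0 : ℝ) hl₁ hl₂ ht₀ (sub_nonneg.2 ht₁) (add_sub_cancel _ _)
  rw [coe_mul_legT_div hl, coe_mul_legT_div hl₁, coe_mul_legT_div hl₂]
  refine iSup_le fun s => ?_
  calc ((s.1 * (t * y₁ + (1 - t) * y₂) - (t * l₁ + (1 - t) * l₂) * f s.1 : ℝ) : EReal)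
      = t * ((s.1 * y₁ - l₁ * f s.1 : ℝ) : EReal)
        + ((1 - t : ℝ) : EReal) * ((s.1 * y₂ - l₂ * f s.1 : ℝ) : EReal) := by
        rw [← EReal.coe_mul, ← EReal.coe_mul, ← EReal.coe_add]
        ring_nf
    _ ≤ _ := by gcongr <;> exact le_iSup_of_le s le_rfl

end LegendreTransform

section Integrand

variable {Ω : Type*} [MeasurableSpace Ω] {P : Measure Ω} {a b : EReal} {f : ℝ → ℝ} {l : ℝ}

lemma lintegral_ofReal_neg_sub_lt_top {ψ h : Ω → ℝ} (hψ : ∫⁻ x, ENNReal.ofReal (-ψ x) ∂P < ⊤)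
    (hh : Integrable h P) : ∫⁻ x, ENNReal.ofReal (-(ψ x - h x)) ∂P < ⊤ :=
  calc ∫⁻ x, ENNReal.ofReal (-(ψ x - h x)) ∂P
      ≤ ∫⁻ x, ENNReal.ofReal (-ψ x) + ENNReal.ofReal (h x) ∂P :=
        lintegral_mono fun x => by rw [neg_sub, sub_eq_neg_add]; exact ENNReal.ofReal_add_le
    _ = ∫⁻ x, ENNReal.ofReal (-ψ x) ∂P + ∫⁻ x, ENNReal.ofReal (h x) ∂P :=
        lintegral_add_right' _ hh.aemeasurable.ennreal_ofReal
    _ < ⊤ := ENNReal.add_lt_top.2 ⟨hψ, hh.lintegral_lt_top⟩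

variable {ψ h : Ω → ℝ}

lemma aemeasurable_toENNReal_coe_mul_legT_div (ha : 0 ≤ a) (hl : 0 < l) (hψ : Measurable ψ)
    (hh : Integrable h P) :
    AEMeasurable (fun x => ((l : EReal) * legT a b f ((ψ x - h x) / l)).toENNReal) P :=
  (Monotone.measurable fun _ _ h => EReal.toENNReal_le_toENNReal
    (coe_mul_legT_div_mono ha hl h)).comp_aemeasurable (hψ.aemeasurable.sub hh.aemeasurable)

lemma lintegral_toENNReal_neg_coe_mul_legT_div_ne_top (ha1 : a < 1) (hb1 : 1 < b)
    (hf1 : f 1 = 0) (hl : 0 < l) (hψ : ∫⁻ x, ENNReal.ofReal (-ψ x) ∂P < ⊤)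
    (hh : Integrable h P) :
    ∫⁻ x, (-((l : EReal) * legT a b f ((ψ x - h x) / l))).toENNReal ∂P ≠ ⊤ :=
  ne_top_of_lt <| (lintegral_ofReal_neg_sub_lt_top hψ hh).trans_le' <| lintegral_mono fun x =>
    (EReal.toENNReal_le_toENNReal <| EReal.neg_le_neg_iff.2 <|
      le_coe_mul_legT_div ha1 hb1 hf1 hl (ψ x - h x)).trans_eq (EReal.real_coe_toENNReal _)

end Integrand

theorem gen_DRO_objective_convex_general {Ω : Type*} [MeasurableSpace Ω]
    {a b : EReal} (ha : 0 ≤ a) (ha1 : a < 1) (hb1 : (1 : EReal) < b)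
    {f : ℝ → ℝ}
    (hf1 : f 1 = 0)
    (P : Measure Ω) [IsProbabilityMeasure P]
    {k : ℕ} {φ : Fin k → Ω → ℝ}
    (hφ1 : ∀ i, Integrable (φ i) P)
    {ψ : Ω → ℝ} (hψm : Measurable ψ) (hψ1 : ∫⁻ x, ENNReal.ofReal (-(ψ x)) ∂P < ⊤)
    {g : (Fin k → ℝ) → ℝ}
    (gs : (Fin k → ℝ) → ℝ)
    (hgs : ∀ ν : Fin k → ℝ,
      IsLUB (range fun z : Fin k → ℝ => (∑ i, ν i * z i) - g z) (gs ν))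
    {η : ℝ}
    (F : ℝ × ℝ × (Fin k → ℝ) → EReal)
    (hF : ∀ p : ℝ × ℝ × (Fin k → ℝ),
      F p = ((gs p.2.2 + p.2.1 + η * p.1 : ℝ) : EReal)
        + (p.1 : EReal)
          * feexp P (fun x => legT a b f ((ψ x - ∑ i, p.2.2 i * φ i x - p.2.1) / p.1))) :
    ∀ p q : ℝ × ℝ × (Fin k → ℝ), 0 < p.1 → 0 < q.1 → ∀ t : ℝ, 0 ≤ t → t ≤ 1 →
      F (t • p + (1 - t) • q) ≤ (t : EReal) * F p + ((1 - t : ℝ) : EReal) * F q := by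
  intro p q hp hq t ht₀ ht₁
  set w : ℝ × ℝ × (Fin k → ℝ) → Ω → ℝ := fun p x => ψ x - (∑ i, p.2.2 i * φ i x + p.2.1)
  have hF' (p : ℝ × ℝ × (Fin k → ℝ)) (hp : 0 < p.1) :
      F p = ((gs p.2.2 + p.2.1 + η * p.1 : ℝ) : EReal)
        + feexp P (fun x => (p.1 : EReal) * legT a b f (w p x / p.1)) := by
    simp only [hF, w, sub_sub, feexp_const_mul hp.le]
  have h_int (p : ℝ × ℝ × (Fin k → ℝ)) :
      Integrable (fun x => ∑ i, p.2.2 i * φ i x + p.2.1) P :=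
    (integrable_finsetSum _ fun i _ => (hφ1 i).const_mul _).add (integrable_const _)
  set m := t • p + (1 - t) • q
  have hw_comb (x : Ω) : w m x = t * w p x + (1 - t) * w q x := by
    simp only [w, m, Prod.snd_add, Prod.smul_snd, Prod.fst_add, Prod.smul_fst, smul_eq_mul,
      sum_smul_add_smul_mul]
    ring
  have hm : 0 < m.1 := convex_Ioi (0 : ℝ) hp hq ht₀ (sub_nonneg.2 ht₁) (add_sub_cancel _ _)
  rw [hF' m hm, hF' p hp, hF' q hq]
  refine EReal.coe_add_le_mul_add_mul ht₀ (sub_nonneg.2 ht₁) ?_ ?_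
  · have hgs_comb : gs (t • p.2.2 + (1 - t) • q.2.2) ≤ t * gs p.2.2 + (1 - t) * gs q.2.2 :=
      (convexOn_of_isLUB_legendre hgs).2 trivial trivial ht₀ (sub_nonneg.2 ht₁)
        (add_sub_cancel _ _)
    simp only [m, Prod.fst_add, Prod.snd_add, Prod.smul_fst, Prod.smul_snd, smul_eq_mul]
    linarith
  · exact feexp_le_mul_add_mul ht₀ (sub_nonneg.2 ht₁)
      (fun x => by rw [hw_comb]; exact coe_mul_legT_div_convex_comb hp hq ht₀ ht₁ _ _)
      (aemeasurable_toENNReal_coe_mul_legT_div ha hp hψm (h_int p))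
      (aemeasurable_toENNReal_coe_mul_legT_div ha hq hψm (h_int q))
      (lintegral_toENNReal_neg_coe_mul_legT_div_ne_top ha1 hb1 hf1 hp hψ1 (h_int p))
      (lintegral_toENNReal_neg_coe_mul_legT_div_ne_top ha1 hb1 hf1 hq hψ1 (h_int q))

/-- The objective function `(λ, β, ν) ↦ g*(ν) + β + ηλ + λ E_P[f*((ψ - ν·φ - β)/λ)]`
of the general DRO dual problem is convex on `(0,∞) × ℝ × ℝᵏ`. -/
theorem gen_DRO_objective_convex {Ω : Type*} [MeasurableSpace Ω]
    {a b : EReal} (ha : 0 ≤ a) (ha1 : a < 1) (hb1 : (1 : EReal) < b)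
    {f : ℝ → ℝ} (hf : ConvexOn ℝ {t : ℝ | a < (t : EReal) ∧ (t : EReal) < b} f)
    (hf1 : f 1 = 0)
    (P : Measure Ω) [IsProbabilityMeasure P]
    {k : ℕ} {φ : Fin k → Ω → ℝ}
    (hφm : ∀ i, Measurable (φ i)) (hφ1 : ∀ i, Integrable (φ i) P)
    {ψ : Ω → ℝ} (hψm : Measurable ψ) (hψ1 : ∫⁻ x, ENNReal.ofReal (-(ψ x)) ∂P < ⊤)
    {g : (Fin k → ℝ) → ℝ} (hg : ConvexOn ℝ univ g)
    (gs : (Fin k → ℝ) → ℝ)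
    (hgs : ∀ ν : Fin k → ℝ,
      IsLUB (range fun z : Fin k → ℝ => (∑ i, ν i * z i) - g z) (gs ν))
    {η : ℝ} (hη : 0 < η)
    (F : ℝ × ℝ × (Fin k → ℝ) → EReal)
    (hF : ∀ p : ℝ × ℝ × (Fin k → ℝ),
      F p = ((gs p.2.2 + p.2.1 + η * p.1 : ℝ) : EReal)
        + (p.1 : EReal)
          * feexp P (fun x => legT a b f ((ψ x - ∑ i, p.2.2 i * φ i x - p.2.1) / p.1))) :
    ∀ p q : ℝ × ℝ × (Fin k → ℝ), 0 < p.1 → 0 < q.1 → ∀ t : ℝ, 0 ≤ t → t ≤ 1 →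
      F (t • p + (1 - t) • q) ≤ (t : EReal) * F p + ((1 - t : ℝ) : EReal) * F q :=
  gen_DRO_objective_convex_general ha ha1 hb1 hf1 P hφ1 hψm hψ1 gs hgs F hF
end
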